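/- Assume μ is regular, cf(λ) ≥ μ^{++}, C̄ is an S^λ_μ-club-guessing sequence (for every club E ⊆ λ there is α ∈ S^λ_μ with C_α ⊆ E), and 𝒜 ⊆ [μ]^μ is a MAD family with |𝒜| ≥ λ. Then X = X[λ, μ, 𝒜, C̄] is high: every closed unbounded F ⊆ X satisfies |{α : |F ∩ X_α| = |F|}| ≥ μ. -/

import Mathlib

open Set Ordinal Cardinal Topology

noncomputable section

namespace DSoukupPaper

/-- The set `S^λ_μ` of ordinals below `lam` of cofinality `mu`. -/
def Sset (lam : Ordinal.{0}) (mu : Cardinal.{0}) : Set Ordinal := {α | α < lam ∧ α.cof = mu}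

/-- `C` is a club in the ordinal `o`. -/
def IsClubBelow (C : Set Ordinal.{0}) (o : Ordinal.{0}) : Prop :=
  C ⊆ Set.Iio o ∧ (∀ β < o, ∃ γ ∈ C, β ≤ γ) ∧
    (∀ β < o, Order.IsSuccLimit β → (∀ γ < β, ∃ δ ∈ C, γ < δ ∧ δ < β) → β ∈ C)

/-- `A` is nonstationary in the ordinal `o`. -/
def IsNonstationaryBelow (A : Set Ordinal.{0}) (o : Ordinal.{0}) : Prop :=
  ∃ C : Set Ordinal, IsClubBelow C o ∧ ∀ x ∈ A, x ∉ C

/-- `A` is stationary in the ordinal `o`. -/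
def IsStationaryBelow (A : Set Ordinal.{0}) (o : Ordinal.{0}) : Prop :=
  ∀ C : Set Ordinal, IsClubBelow C o → ∃ x ∈ A, x ∈ C

/-- A `T₁` space is linearly D iff every nontrivial monotone open cover admits a
closed discrete big set (Guo–Junnila characterization, taken as definition). -/
def LinearlyDSpace (Y : Type*) [TopologicalSpace Y] : Prop :=
  ∀ 𝒰 : Set (Set Y), (∀ U ∈ 𝒰, IsOpen U) → ⋃₀ 𝒰 = Set.univ →
    IsChain (· ⊆ ·) 𝒰 → (∀ U ∈ 𝒰, U ≠ Set.univ) →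
    ∃ D : Set Y, IsClosed D ∧ DiscreteTopology D ∧ ∀ U ∈ 𝒰, ¬D ⊆ U

/-- The data of the construction `X[λ,μ,𝒜,C̄]`: cardinals `λ > μ = cf(μ)`,
a MAD family `𝒜 = {M^φ : φ < κ} ⊆ [μ]^μ`, and an `S^λ_μ`-club sequence
`C̄ = ⟨C_α : α ∈ S^λ_μ⟩`, given via increasing enumerations `a α : μ → C_α`. -/
structure Setup where
  lam : Cardinal.{0}
  mu : Cardinal.{0}
  kappa : Cardinal.{0}
  mu_reg : mu.IsRegular
  mu_lt_lam : mu < lam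
  /-- the MAD family: `M φ` for `φ < κ` -/
  M : Ordinal.{0} → Set Ordinal.{0}
  M_sub : ∀ φ < kappa.ord, M φ ⊆ Set.Iio mu.ord
  M_card : ∀ φ < kappa.ord, #(M φ) = Cardinal.lift.{1} mu
  M_ad : ∀ φ < kappa.ord, ∀ ψ < kappa.ord, φ ≠ ψ →
    #(↥(M φ ∩ M ψ)) < Cardinal.lift.{1} mu
  M_mad : ∀ N ⊆ Set.Iio mu.ord, #N = Cardinal.lift.{1} mu →
    ∃ φ < kappa.ord, #(↥(N ∩ M φ)) = Cardinal.lift.{1} mu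
  /-- the club sequence: `a α ξ` is the `ξ`-th element of `C_α` -/
  a : Ordinal.{0} → Ordinal.{0} → Ordinal.{0}
  a_mono : ∀ α ∈ Sset lam.ord mu, ∀ ξ < mu.ord, ∀ ζ < ξ, a α ζ < a α ξ
  a_lt : ∀ α ∈ Sset lam.ord mu, ∀ ξ < mu.ord, a α ξ < α
  a_unbounded : ∀ α ∈ Sset lam.ord mu, ∀ β < α, ∃ ξ < mu.ord, β ≤ a α ξ
  a_closed : ∀ α ∈ Sset lam.ord mu, ∀ ξ < mu.ord, Order.IsSuccLimit ξ →
    IsLUB (a α '' Set.Iio ξ) (a α ξ)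

namespace Setup

variable (P : Setup)

/-- `C_α` as a set. -/
def C (α : Ordinal) : Set Ordinal := P.a α '' Set.Iio P.mu.ord

open Classical in
/-- the interval `I^ξ_α`. -/
def I (α ξ : Ordinal) : Set Ordinal :=
  if Order.IsSuccLimit ξ then Set.Icc (P.a α ξ) (P.a α (ξ + 1)) else Set.Ioc (P.a α ξ) (P.a α (ξ + 1))

/-- the underlying set of the space: a subset of `λ × κ`. -/
def Xset : Set (Ordinal × Ordinal) :=
  {p | p.1 < P.lam.ord ∧
    ((p.1 ∈ Sset P.lam.ord P.mu ∧ p.2 < P.kappa.ord) ∨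
      (p.1 ∉ Sset P.lam.ord P.mu ∧ p.2 = 0))}

/-- the column `X_α` (as a set of pairs). -/
def col (α : Ordinal) : Set (Ordinal × Ordinal) := {p ∈ P.Xset | p.1 = α}

/-- basic neighborhood `U((α,φ),η)` for `α ∈ S^λ_μ`. -/
def U1 (α φ η : Ordinal) : Set (Ordinal × Ordinal) :=
  {(α, φ)} ∪ ⋃ γ ∈ (⋃ ξ ∈ {ξ | ξ ∈ P.M φ ∧ η ≤ ξ}, P.I α ξ), P.col γ

/-- basic neighborhood `U(α,β) = ⋃{X_γ : β < γ ≤ α}`. -/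
def U3 (α β : Ordinal) : Set (Ordinal × Ordinal) := ⋃ γ ∈ Set.Ioc β α, P.col γ

/-- the collection of basic open sets. -/
def basics : Set (Set (Ordinal × Ordinal)) :=
  {B | (∃ α ∈ Sset P.lam.ord P.mu, ∃ φ < P.kappa.ord, ∃ η < P.mu.ord, B = P.U1 α φ η) ∨
    (∃ α < P.lam.ord, α.cof < P.mu ∧ B = {(α, 0)}) ∨
    (∃ α < P.lam.ord, P.mu < α.cof ∧ ∃ β < α, B = P.U3 α β)}

/-- the topology of `X[λ,μ,𝒜,C̄]`, generated by the basic open sets. -/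
instance instTopo : TopologicalSpace ↥P.Xset :=
  TopologicalSpace.generateFrom {V | ∃ B ∈ P.basics, V = Subtype.val ⁻¹' B}

/-- the column `X_α` viewed inside the space. -/
def colS (α : Ordinal) : Set ↥P.Xset := {x | (x : Ordinal × Ordinal).1 = α}

/-- the projection `π(F) = {α < λ : F ∩ X_α ≠ ∅}`. -/
def pi (F : Set ↥P.Xset) : Set Ordinal := {α | ∃ x ∈ F, (x : Ordinal × Ordinal).1 = α}

/-- `F` is unbounded iff `π(F)` is unbounded in `λ`. -/
def Unbounded (F : Set ↥P.Xset) : Prop := ∀ β < P.lam.ord, ∃ γ ∈ P.pi F, β < γ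

/-- `F` is high enough iff `|{α < λ : |F_α| = |F|}| ≥ μ`. -/
def HighEnough (F : Set ↥P.Xset) : Prop :=
  Cardinal.lift.{1} P.mu ≤ #({α | #(↥(F ∩ P.colS α)) = #F} : Set Ordinal)

end Setup
end DSoukupPaper

/-!
Let `E` be the set of limits of `π(F)` below `λ`; as `cf λ > ω`, `E` is club. Club guessing, applied
to the tails of `E`, yields unboundedly many `α ∈ S^λ_μ` with `C_α ⊆ E`. For such `α` every basic
neighbourhood of a point of `X_α` meets `F`, so `X_α ⊆ F` since `F` is closed, and
`|F ∩ X_α| = |X_α| = κ ≥ |X| ≥ |F|`. These `α` are unbounded in `λ`, so there are at least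
`cf λ ≥ μ` of them.
-/

open Filter

namespace DSoukupPaper

theorem mem_closure_generateFrom_of_directedOn {X ι : Type*} {g : Set (Set X)} {x : X}
    {s : Set X} {S : Set ι} {V : ι → Set X} (hdir : DirectedOn (V ⁻¹'o (· ≥ ·)) S)
    (hS : S.Nonempty) (hg : ∀ t ∈ g, x ∈ t → ∃ i ∈ S, V i ⊆ t)
    (hs : ∀ i ∈ S, (V i ∩ s).Nonempty) :
    x ∈ @closure X (TopologicalSpace.generateFrom g) s := by
  let _ := TopologicalSpace.generateFrom g
  have hbasis := Filter.hasBasis_biInf_principal hdir hS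
  have hle : ⨅ i ∈ S, 𝓟 (V i) ≤ 𝓝 x := by
    rw [TopologicalSpace.nhds_generateFrom]
    refine le_iInf₂ fun t ⟨hxt, htg⟩ => Filter.le_principal_iff.2 ?_
    obtain ⟨i, hi, hVt⟩ := hg t htg hxt
    exact hbasis.mem_iff.2 ⟨i, hi, hVt⟩
  rw [mem_closure_iff_clusterPt, ClusterPt]
  exact (hbasis.inf_principal_neBot_iff.2 hs).mono (inf_le_inf_right _ hle)

theorem lift_cof_le_mk_of_forall_exists_gt {s : Set Ordinal.{u}} {o : Ordinal.{u}}
    (hs : ∀ β < o, ∃ γ ∈ s, γ < o ∧ β < γ) : Cardinal.lift.{u + 1} o.cof ≤ #s := by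
  by_contra! hlt
  have hsup : sSup (s ∩ Iio o) < o := by
    refine Ordinal.sSup_lt_of_lt_cof ?_ fun _ h => h.2
    rw [← Ordinal.lift_cof]
    exact (mk_le_mk_of_subset inter_subset_left).trans_lt hlt
  obtain ⟨γ, hγs, hγo, hγ⟩ := hs _ hsup
  exact hγ.not_ge (le_csSup ⟨o, fun _ h => h.2.le⟩ ⟨hγs, hγo⟩)

def accBelow (A : Set Ordinal.{0}) (o : Ordinal.{0}) : Set Ordinal :=
  {γ | γ < o ∧ ∀ β < γ, (A ∩ Ioo β γ).Nonempty}

theorem isClubBelow_accBelow {A : Set Ordinal.{0}} {o : Ordinal.{0}}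
    (hA : ∀ β < o, ∃ δ ∈ A, δ < o ∧ β < δ) (ho : ℵ₀ < o.cof) :
    IsClubBelow (accBelow A o) o := by
  refine ⟨fun γ hγ => hγ.1, fun β hβ => ?_, fun β hβ _ hacc => ⟨hβ, fun γ hγ => ?_⟩⟩
  · choose next hnextA hnext_lt hlt_next using hA
    let f : ℕ → Iio o := fun n => (fun x : Iio o => ⟨next x x.2, hnext_lt x x.2⟩)^[n] ⟨β, hβ⟩
    have hf : ∀ n, (f (n + 1) : Ordinal) ∈ A ∧ (f n : Ordinal) < f (n + 1) := fun n => by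
      simp only [f, Function.iterate_succ_apply']
      exact ⟨hnextA _ _, hlt_next _ _⟩
    have hsup : ⨆ n, (f n : Ordinal) < o :=
      Ordinal.iSup_lt_of_lt_cof (by rwa [mk_nat]) fun n => (f n).2
    refine ⟨⨆ n, (f n : Ordinal), ⟨hsup, fun γ hγ => ?_⟩,
      Ordinal.le_iSup (fun n => (f n : Ordinal)) 0⟩
    obtain ⟨n, hn⟩ := Ordinal.lt_iSup_iff.1 hγ
    exact ⟨f (n + 1), (hf n).1, hn.trans (hf n).2,
      (hf (n + 1)).2.trans_le (Ordinal.le_iSup (fun n => (f n : Ordinal)) (n + 2))⟩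
  · obtain ⟨δ, hδ, hγδ, hδβ⟩ := hacc γ hγ
    obtain ⟨ε, hεA, hγε, hεδ⟩ := hδ.2 γ hγδ
    exact ⟨ε, hεA, hγε, hεδ.trans hδβ⟩

theorem IsClubBelow.inter_Ioi {C : Set Ordinal.{0}} {o β : Ordinal.{0}} (hC : IsClubBelow C o)
    (ho : Order.IsSuccLimit o) (hβ : β < o) : IsClubBelow (C ∩ Ioi β) o := by
  obtain ⟨hCo, hunb, hcl⟩ := hC
  refine ⟨fun γ hγ => hCo hγ.1, fun γ hγ => ?_, fun γ hγ hlim hacc => ⟨?_, ?_⟩⟩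
  · obtain ⟨δ, hδC, hδ⟩ := hunb _ (max_lt (ho.succ_lt hβ) hγ)
    exact ⟨δ, ⟨hδC, Order.succ_le_iff.1 ((le_max_left _ _).trans hδ)⟩,
      (le_max_right _ _).trans hδ⟩
  · exact hcl γ hγ hlim fun ε hε => (hacc ε hε).imp fun δ h => ⟨h.1.1, h.2⟩
  · obtain ⟨δ, hδ, -, hδγ⟩ := hacc 0 (pos_iff_ne_zero.2 hlim.ne_bot)
    exact hδ.2.trans hδγ

namespace Setup

variable (P : Setup)

theorem ord_mu_isSuccLimit : Order.IsSuccLimit P.mu.ord :=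
  isSuccLimit_ord P.mu_reg.aleph0_le

theorem ord_mu_pos : 0 < P.mu.ord :=
  P.ord_mu_isSuccLimit.bot_lt

theorem isSuccLimit_of_mem_Sset {α : Ordinal} (hα : α ∈ Sset P.lam.ord P.mu) :
    Order.IsSuccLimit α :=
  Ordinal.one_lt_cof_iff.1 (hα.2 ▸ one_lt_aleph0.trans_le P.mu_reg.aleph0_le)

variable {P}

theorem a_strictMonoOn {α : Ordinal} (hα : α ∈ Sset P.lam.ord P.mu) :
    StrictMonoOn (P.a α) (Iio P.mu.ord) :=
  fun _ _ ξ hξ hζξ => P.a_mono α hα ξ hξ _ hζξ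

theorem a_lt_a_add_one {α ξ : Ordinal} (hα : α ∈ Sset P.lam.ord P.mu) (hξ : ξ < P.mu.ord) :
    P.a α ξ < P.a α (ξ + 1) :=
  P.a_mono α hα _ (P.ord_mu_isSuccLimit.add_one_lt hξ) ξ (Order.lt_add_one_iff.2 le_rfl)

theorem exists_mem_M_ge {φ η : Ordinal} (hφ : φ < P.kappa.ord) (hη : η < P.mu.ord) :
    ∃ ξ ∈ P.M φ, η ≤ ξ := by
  by_contra! h
  have hle : #(P.M φ) ≤ #(Iio η) := mk_le_mk_of_subset h
  rw [P.M_card φ hφ, Cardinal.mk_Iio_ordinal, Cardinal.lift_le] at hle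
  exact (Cardinal.lt_ord.1 hη).not_ge hle

theorem Xset_subset_prod (hkappa : P.lam ≤ P.kappa) :
    P.Xset ⊆ Iio P.lam.ord ×ˢ Iio P.kappa.ord := by
  have hκ : 0 < P.kappa.ord :=
    Cardinal.ord_pos.2 (P.mu_reg.pos.trans (P.mu_lt_lam.trans_le hkappa))
  rintro p ⟨hp, ⟨-, hp2⟩ | ⟨-, hp2⟩⟩
  · exact ⟨hp, hp2⟩
  · exact ⟨hp, hp2 ▸ hκ⟩

theorem mk_Xset_le (hkappa : P.lam ≤ P.kappa) : #P.Xset ≤ Cardinal.lift.{1} P.kappa := by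
  have hmul : P.lam * P.kappa = P.kappa :=
    Cardinal.mul_eq_right (P.mu_reg.aleph0_le.trans (P.mu_lt_lam.le.trans hkappa)) hkappa
      (P.mu_reg.pos.trans P.mu_lt_lam).ne'
  calc #P.Xset ≤ #(Iio P.lam.ord ×ˢ Iio P.kappa.ord) :=
        mk_le_mk_of_subset (Xset_subset_prod hkappa)
    _ = Cardinal.lift.{1} P.kappa := by
      rw [Cardinal.mk_congr (Equiv.Set.prod _ _), mk_prod, Cardinal.mk_Iio_ordinal,
        Cardinal.mk_Iio_ordinal]
      simp [← Cardinal.lift_mul, hmul]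

theorem image_val_colS {α : Ordinal} (hα : α ∈ Sset P.lam.ord P.mu) :
    Subtype.val '' P.colS α = {α} ×ˢ Iio P.kappa.ord := by
  ext ⟨β, φ⟩
  simp only [colS, mem_image, mem_ofPred_eq, Subtype.exists, exists_and_right, exists_eq_right,
    mem_prod, mem_singleton_iff, mem_Iio]
  constructor
  · rintro ⟨⟨-, ⟨-, hφ⟩ | ⟨hβ, -⟩⟩, rfl⟩
    · exact ⟨rfl, hφ⟩
    · exact absurd hα hβ
  · rintro ⟨rfl, hφ⟩
    exact ⟨⟨hα.1, Or.inl ⟨hα, hφ⟩⟩, rfl⟩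

theorem mk_colS {α : Ordinal} (hα : α ∈ Sset P.lam.ord P.mu) :
    #(P.colS α) = Cardinal.lift.{1} P.kappa := by
  rw [← Cardinal.mk_image_eq Subtype.val_injective, image_val_colS hα, singleton_prod,
    Cardinal.mk_image_eq (Prod.mk_right_injective α), Cardinal.mk_Iio_ordinal, card_ord]

theorem mk_inter_colS_of_colS_subset (hkappa : P.lam ≤ P.kappa) {F : Set P.Xset} {α : Ordinal}
    (hα : α ∈ Sset P.lam.ord P.mu) (hsub : P.colS α ⊆ F) :
    #(F ∩ P.colS α : Set P.Xset) = #F := by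
  rw [inter_eq_right.2 hsub]
  refine le_antisymm (mk_le_mk_of_subset hsub) ?_
  calc #F ≤ #P.Xset := mk_set_le F
    _ ≤ _ := mk_Xset_le hkappa
    _ = #(P.colS α) := (mk_colS hα).symm

theorem I_subset_Icc {α ξ : Ordinal} : P.I α ξ ⊆ Icc (P.a α ξ) (P.a α (ξ + 1)) := by
  unfold I
  split_ifs
  exacts [subset_rfl, Ioc_subset_Icc_self]

theorem Ioo_subset_I {α ξ : Ordinal} : Ioo (P.a α ξ) (P.a α (ξ + 1)) ⊆ P.I α ξ := by
  unfold I
  split_ifs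
  exacts [Ioo_subset_Icc_self, Ioo_subset_Ioc_self]

theorem col_subset_U1 {α φ η ξ γ : Ordinal} (hξ : ξ ∈ P.M φ) (hηξ : η ≤ ξ)
    (hγ : γ ∈ P.I α ξ) : P.col γ ⊆ P.U1 α φ η :=
  fun _ hp => Or.inr (mem_biUnion (mem_biUnion (x := ξ) ⟨hξ, hηξ⟩ hγ) hp)

theorem U1_antitone {α φ : Ordinal} : Antitone (P.U1 α φ) := fun _ _ h =>
  union_subset_union_right _ <| biUnion_subset_biUnion_left <|
    biUnion_subset_biUnion_left fun _ hξ => ⟨hξ.1, h.trans hξ.2⟩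

theorem U1_subset {α φ η : Ordinal} (hα : α ∈ Sset P.lam.ord P.mu) (hφ : φ < P.kappa.ord) :
    P.U1 α φ η ⊆ {(α, φ)} ∪ ⋃ γ ∈ Ico (P.a α η) α, P.col γ := by
  refine union_subset_union_right _ (biUnion_subset_biUnion_left ?_)
  simp only [iUnion_subset_iff]
  intro ξ ⟨hξM, hηξ⟩ γ hγ
  have hξ : ξ < P.mu.ord := P.M_sub φ hφ hξM
  exact ⟨((a_strictMonoOn hα).monotoneOn (hηξ.trans_lt hξ) hξ hηξ).trans (I_subset_Icc hγ).1,
    (I_subset_Icc hγ).2.trans_lt (P.a_lt α hα _ (P.ord_mu_isSuccLimit.add_one_lt hξ))⟩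

theorem exists_U1_subset_of_Ioo {α φ β : Ordinal} {B : Set (Ordinal × Ordinal)}
    (hα : α ∈ Sset P.lam.ord P.mu) (hφ : φ < P.kappa.ord) (hβ : β < α)
    (hB : ∀ γ ∈ Ioo β α, P.col γ ⊆ B) (hαφ : (α, φ) ∈ B) :
    ∃ η < P.mu.ord, P.U1 α φ η ⊆ B := by
  obtain ⟨η, hη, hβη⟩ := P.a_unbounded α hα _ ((P.isSuccLimit_of_mem_Sset hα).succ_lt hβ)
  refine ⟨η, hη, (U1_subset hα hφ).trans (union_subset (singleton_subset_iff.2 hαφ) ?_)⟩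
  exact iUnion₂_subset fun γ hγ => hB γ ⟨(Order.succ_le_iff.1 hβη).trans_le hγ.1, hγ.2⟩

/-- `a α' ξ` is a limit of fewer than `μ` ordinals when `ξ` is a limit, so it has cofinality
below `μ` and cannot be a point of `S^λ_μ`. -/
theorem a_lt_of_mem_I {α α' ξ : Ordinal} (hα : α ∈ Sset P.lam.ord P.mu)
    (hα' : α' ∈ Sset P.lam.ord P.mu) (hξ : ξ < P.mu.ord) (h : α ∈ P.I α' ξ) : P.a α' ξ < α := by
  refine (I_subset_Icc h).1.lt_of_ne fun heq => ?_
  by_cases hlim : Order.IsSuccLimit ξ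
  · have hLUB := heq ▸ P.a_closed α' hα' ξ hξ hlim
    have hcof : Cardinal.lift.{1} α.cof ≤ #(P.a α' '' Iio ξ) := by
      refine lift_cof_le_mk_of_forall_exists_gt fun β hβ => ?_
      obtain ⟨_, ⟨ζ, hζ, rfl⟩, hβζ, -⟩ := hLUB.exists_between hβ
      exact ⟨_, mem_image_of_mem _ hζ, heq ▸ P.a_mono α' hα' ξ hξ ζ hζ, hβζ⟩
    have hlt : #(P.a α' '' Iio ξ) < Cardinal.lift.{1} P.mu :=
      mk_image_le.trans_lt (by
        rw [Cardinal.mk_Iio_ordinal, Cardinal.lift_lt]; exact Cardinal.lt_ord.1 hξ)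
    rw [hα.2] at hcof
    exact (hcof.trans_lt hlt).false
  · unfold I at h
    rw [if_neg hlim] at h
    exact h.1.ne heq

theorem exists_U1_subset_of_mem_basics {α φ : Ordinal} {B : Set (Ordinal × Ordinal)}
    (hα : α ∈ Sset P.lam.ord P.mu) (hφ : φ < P.kappa.ord) (hB : B ∈ P.basics)
    (hαφ : (α, φ) ∈ B) : ∃ η < P.mu.ord, P.U1 α φ η ⊆ B := by
  rcases hB with ⟨α', hα', φ', hφ', η', hη', rfl⟩ | ⟨α', -, hcof, rfl⟩ | ⟨α', -, -, β, -, rfl⟩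
  · rcases hαφ with hαφ | hαφ
    · obtain ⟨rfl, rfl⟩ := Prod.mk.inj hαφ
      exact ⟨η', hη', subset_rfl⟩
    obtain ⟨γ, hγ, -, rfl⟩ := mem_iUnion₂.1 hαφ
    obtain ⟨ξ, ⟨hξM, hηξ⟩, hαI⟩ := mem_iUnion₂.1 hγ
    have hξ : ξ < P.mu.ord := P.M_sub φ' hφ' hξM
    refine exists_U1_subset_of_Ioo hα hφ (a_lt_of_mem_I hα hα' hξ hαI) (fun γ hγ => ?_) ?_
    · exact col_subset_U1 hξM hηξ (Ioo_subset_I ⟨hγ.1, hγ.2.trans_le (I_subset_Icc hαI).2⟩)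
    · exact col_subset_U1 hξM hηξ hαI ⟨⟨hα.1, Or.inl ⟨hα, hφ⟩⟩, rfl⟩
  · obtain rfl : α = α' := (Prod.mk.inj hαφ).1
    exact absurd (hα.2 ▸ hcof) (lt_irrefl _)
  · obtain ⟨γ, hγ, hαγ⟩ := mem_iUnion₂.1 hαφ
    obtain rfl : α = γ := hαγ.2
    refine exists_U1_subset_of_Ioo hα hφ hγ.1 (fun δ hδ => ?_) hαφ
    exact subset_biUnion_of_mem (u := P.col) ⟨hδ.1, hδ.2.le.trans hγ.2⟩

theorem pi_subset_Iio (F : Set P.Xset) : P.pi F ⊆ Iio P.lam.ord := by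
  rintro _ ⟨x, -, rfl⟩
  exact x.2.1

theorem exists_mem_inter_U1 {F : Set P.Xset} {α φ η : Ordinal}
    (hα : α ∈ Sset P.lam.ord P.mu) (hφ : φ < P.kappa.ord) (hη : η < P.mu.ord)
    (hC : P.C α ⊆ accBelow (P.pi F) P.lam.ord) :
    (Subtype.val ⁻¹' P.U1 α φ η ∩ F).Nonempty := by
  obtain ⟨ξ, hξM, hηξ⟩ := exists_mem_M_ge hφ hη
  have hξ : ξ < P.mu.ord := P.M_sub φ hφ hξM
  have hacc := (hC (mem_image_of_mem _ (P.ord_mu_isSuccLimit.add_one_lt hξ))).2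
  obtain ⟨_, ⟨x, hxF, rfl⟩, hx⟩ := hacc _ (a_lt_a_add_one hα hξ)
  exact ⟨x, col_subset_U1 hξM hηξ (Ioo_subset_I hx) ⟨x.2, rfl⟩, hxF⟩

/-- Every neighbourhood of `(α, φ)` contains some `U((α, φ), η)`, and each of these meets `F`:
it contains an interval `I^ξ_α` whose right end `a α (ξ + 1) ∈ C_α` is a limit of `π(F)`. -/
theorem colS_subset_of_C_subset {F : Set P.Xset} (hF : IsClosed F) {α : Ordinal}
    (hα : α ∈ Sset P.lam.ord P.mu) (hC : P.C α ⊆ accBelow (P.pi F) P.lam.ord) :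
    P.colS α ⊆ F := by
  rintro ⟨⟨β, φ⟩, hx⟩ rfl
  have hφ : φ < P.kappa.ord := hx.2.resolve_right (fun h => h.1 hα) |>.2
  rw [← hF.closure_eq]
  refine mem_closure_generateFrom_of_directedOn (S := Iio P.mu.ord)
    (V := fun η => Subtype.val ⁻¹' P.U1 β φ η) ?_ ⟨0, P.ord_mu_pos⟩ ?_
    fun η hη => exists_mem_inter_U1 hα hφ hη hC
  · exact fun η hη η' hη' => ⟨max η η', mem_Iio.2 (max_lt hη hη'),
      preimage_mono (U1_antitone (le_max_left _ _)),
      preimage_mono (U1_antitone (le_max_right _ _))⟩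
  · rintro _ ⟨B, hB, rfl⟩ hxB
    obtain ⟨η, hη, hsub⟩ := exists_U1_subset_of_mem_basics hα hφ hB hxB
    exact ⟨η, hη, preimage_mono hsub⟩

end Setup

/-- If `μ` is regular, `cf(λ) ≥ μ⁺⁺`, `C̄` is an `S^λ_μ`-club-guessing sequence and
`|𝒜| ≥ λ`, then `X[λ,μ,𝒜,C̄]` is high. -/
theorem stmt16 (P : Setup) (hcof : Order.succ (Order.succ P.mu) ≤ P.lam.ord.cof)
    (hguess : ∀ E : Set Ordinal, IsClubBelow E P.lam.ord →
      ∃ α ∈ Sset P.lam.ord P.mu, P.C α ⊆ E)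
    (hkappa : P.lam ≤ P.kappa)
    (F : Set ↥P.Xset) (hF : IsClosed F) (hub : P.Unbounded F) :
    P.HighEnough F := by
  have hmu : P.mu < P.lam.ord.cof := (Order.lt_succ _).trans_le ((Order.le_succ _).trans hcof)
  have hclub : IsClubBelow (accBelow (P.pi F) P.lam.ord) P.lam.ord :=
    isClubBelow_accBelow
      (fun β hβ => (hub β hβ).imp fun γ ⟨hγ, hβγ⟩ => ⟨hγ, P.pi_subset_Iio F hγ, hβγ⟩)
      (P.mu_reg.aleph0_le.trans_lt hmu)
  have hlim : Order.IsSuccLimit P.lam.ord :=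
    isSuccLimit_ord (P.mu_reg.aleph0_le.trans P.mu_lt_lam.le)
  have hhigh : ∀ β < P.lam.ord,
      ∃ α ∈ {α | #(F ∩ P.colS α : Set P.Xset) = #F}, α < P.lam.ord ∧ β < α := by
    intro β hβ
    obtain ⟨α, hα, hC⟩ := hguess _ (hclub.inter_Ioi hlim hβ)
    have hfill := Setup.colS_subset_of_C_subset hF hα fun _ h => (hC h).1
    refine ⟨α, Setup.mk_inter_colS_of_colS_subset hkappa hα hfill, hα.1, ?_⟩
    exact (hC (mem_image_of_mem _ P.ord_mu_pos)).2.trans (P.a_lt α hα 0 P.ord_mu_pos)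
  exact (Cardinal.lift_le.2 hmu.le).trans (lift_cof_le_mk_of_forall_exists_gt hhigh)

end DSoukupPaper
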